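/- arXiv:2605.25314 — 3 statements merged into one kernel-verified Lean document; each statement's English description precedes it below -/
import Mathlib

section
/- Let f₁,…,f_r be nonzero linear functionals on ℂⁿ defining a central hyperplane arrangement which is essential and indecomposable. Then for every edge W ≠ {0} one has dim_ℂ span_ℂ{f_i : f_i|_W ≠ 0} > dim_ℂ W. -/
/-!
Let `J` be the set of indices whose functional does not vanish on `W`, `V` the span of the
`f_j` with `j ∈ J`, and `W°` the annihilator of `W` in the dual. Every `f_i` lies in `V` or in
`W°`, so essentiality gives `V ⊔ W° = ⊤`, and the dimension formula then reads
`dim V = dim W + dim (V ⊓ W°)`. The functionals outside `J` span a subspace of `W°`, so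
indecomposability makes `V ⊓ W°` nonzero; `J` is nonempty because `W ≠ 0`, and its
complement is nonempty because `W` is an edge.
-/

open Module Submodule

section Annihilator

variable {K E ι : Type*} [Field K] [AddCommGroup E] [Module K E]

theorem span_image_le_dualAnnihilator (f : ι → Dual K E) (W : Submodule K E) {I : Set ι}
    (hI : ∀ i ∈ I, W ≤ LinearMap.ker (f i)) :
    span K (f '' I) ≤ W.dualAnnihilator := by
  rw [span_le]
  rintro _ ⟨i, hi, rfl⟩
  exact (mem_dualAnnihilator _).2 fun w hw => hI i hi hw

theorem span_image_nonvanishing_sup_dualAnnihilator_eq_top (f : ι → Dual K E)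
    (W : Submodule K E) (hspan : span K (Set.range f) = ⊤) :
    span K (f '' {i | ¬ W ≤ LinearMap.ker (f i)}) ⊔ W.dualAnnihilator = ⊤ := by
  rw [eq_top_iff, ← hspan, span_le]
  rintro _ ⟨i, rfl⟩
  by_cases hi : W ≤ LinearMap.ker (f i)
  · exact mem_sup_right ((mem_dualAnnihilator _).2 fun w hw => hi hw)
  · exact mem_sup_left (subset_span ⟨i, hi, rfl⟩)

theorem finrank_eq_finrank_add_finrank_inf_dualAnnihilator [FiniteDimensional K E]
    (W : Submodule K E) {V : Submodule K (Dual K E)} (hV : V ⊔ W.dualAnnihilator = ⊤) :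
    finrank K V = finrank K W + finrank K ↥(V ⊓ W.dualAnnihilator) := by
  have hsup := finrank_sup_add_finrank_inf_eq V W.dualAnnihilator
  have hann := Subspace.finrank_add_finrank_dualAnnihilator_eq W
  rw [hV, finrank_top, Subspace.dual_finrank_eq] at hsup
  omega

end Annihilator

theorem edge_span_dim_lt_general
    (n r : ℕ)
    (f : Fin r → ((Fin n → ℂ) →ₗ[ℂ] ℂ))
    (hess : Submodule.span ℂ (Set.range f) = ⊤)
    (hindec : ∀ I : Set (Fin r), I.Nonempty → Iᶜ.Nonempty →
      Submodule.span ℂ (f '' I) ⊓ Submodule.span ℂ (f '' Iᶜ) ≠ ⊥)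
    (W : Submodule ℂ (Fin n → ℂ))
    (hW : ∃ S : Finset (Fin r), S.Nonempty ∧ W = ⨅ i ∈ S, LinearMap.ker (f i))
    (hW0 : W ≠ ⊥) :
    Module.finrank ℂ W <
      Module.finrank ℂ (Submodule.span ℂ (f '' {i | ¬ W ≤ LinearMap.ker (f i)})) := by
  have hdim := finrank_eq_finrank_add_finrank_inf_dualAnnihilator W
    (span_image_nonvanishing_sup_dualAnnihilator_eq_top f W hess)
  set J : Set (Fin r) := {i | ¬ W ≤ LinearMap.ker (f i)}
  have hWpos : 1 ≤ finrank ℂ W := one_le_finrank_iff.2 hW0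
  have hJ : J.Nonempty := by
    by_contra hJ
    rw [Set.not_nonempty_iff_eq_empty.1 hJ, Set.image_empty, span_empty, finrank_bot] at hdim
    omega
  have hJc : Jᶜ.Nonempty := by
    obtain ⟨S, ⟨i, hi⟩, rfl⟩ := hW
    exact ⟨i, not_not.2 (biInf_le _ hi)⟩
  have hinf : span ℂ (f '' J) ⊓ W.dualAnnihilator ≠ ⊥ :=
    ne_bot_of_le_ne_bot (hindec J hJ hJc) <| inf_le_inf_left _ <|
      span_image_le_dualAnnihilator f W fun _ hi => not_not.1 hi
  rw [hdim]
  exact Nat.lt_add_of_pos_right (one_le_finrank_iff.2 hinf)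

/-- Let `f₁,…,f_r` be nonzero linear functionals on `ℂⁿ` defining a central hyperplane
arrangement which is essential and indecomposable.  Then for every edge `W ≠ {0}` one has
`dim_ℂ span_ℂ {f_i : f_i|_W ≠ 0} > dim_ℂ W`. -/
theorem edge_span_dim_lt
    (n r : ℕ)
    (f : Fin r → ((Fin n → ℂ) →ₗ[ℂ] ℂ))
    (hne : ∀ i, f i ≠ 0)
    (hess : Submodule.span ℂ (Set.range f) = ⊤)
    (hindec : ∀ I : Set (Fin r), I.Nonempty → Iᶜ.Nonempty →
      Submodule.span ℂ (f '' I) ⊓ Submodule.span ℂ (f '' Iᶜ) ≠ ⊥)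
    (W : Submodule ℂ (Fin n → ℂ))
    (hW : ∃ S : Finset (Fin r), S.Nonempty ∧ W = ⨅ i ∈ S, LinearMap.ker (f i))
    (hW0 : W ≠ ⊥) :
    Module.finrank ℂ W <
      Module.finrank ℂ (Submodule.span ℂ (f '' {i | ¬ W ≤ LinearMap.ker (f i)})) :=
  edge_span_dim_lt_general n r f hess hindec W hW hW0
end

section
/- Let f₁,…,f_r be nonzero linear functionals on ℂⁿ defining a central hyperplane arrangement which is essential and indecomposable. Then for every edge W ≠ {0} there exist subsets J, J' ⊆ {1,…,r} such that {f_j : j ∈ J} and {f_j : j ∈ J'} are each bases of the dual space (ℂⁿ)*, and #{j ∈ J : W ⊆ ker f_j} < codim W while #{j ∈ J' : W ⊆ ker f_j} = codim W. -/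
open scoped Classical

/-!
Let `T` be the set of indices `j` with `W ⊆ ker f_j`. Because `W` is an edge, the `f_j` with
`j ∈ T` span the annihilator of `W`, which has dimension `c = codim W`. A basis of the dual
space chosen from the `f_j` by extending a basis of `span {f_j : j ∈ T}` meets `T` in exactly
`c` elements. A basis obtained instead by extending a basis of `span {f_j : j ∉ T}`, of
dimension `d`, meets `T` in `n - d` elements; indecomposability says that the two spans
intersect nontrivially, and since they add up to the whole dual space, `n < c + d`.
-/

open Module Submodule

section DivisionRing

variable {K V ι : Type*} [DivisionRing K] [AddCommGroup V] [Module K V]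

theorem LinearIndepOn.finrank_span_image_eq_card {f : ι → V} {s : Finset ι}
    (hs : LinearIndepOn K f (s : Set ι)) : finrank K (span K (f '' s)) = s.card := by
  rw [Set.image_eq_range, finrank_span_eq_card hs]
  simp

variable (K) in
/-- `J` extends a basis of `span (f '' {j | p j})` chosen from that family; an index of `p`
added by the extension would map into that span, against independence. -/
theorem exists_linearIndepOn_card_filter_eq_finrank [Finite ι] (f : ι → V) (p : ι → Prop)
    [DecidablePred p] :
    ∃ J : Finset ι, LinearIndepOn K f (J : Set ι) ∧ span K (f '' J) = span K (Set.range f) ∧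
      (J.filter p).card = finrank K (span K (f '' {j | p j})) := by
  have := Fintype.ofFinite ι
  obtain ⟨J₀, hJ₀p, -, hpJ₀, hJ₀⟩ :=
    exists_linearIndepOn_extension (linearIndepOn_empty K f) (Set.empty_subset {j | p j})
  obtain ⟨J, -, hJ₀J, hJ, hJind⟩ := exists_linearIndepOn_extension hJ₀ (Set.subset_univ J₀)
  have hJp : ∀ j ∈ J, p j → j ∈ J₀ := by
    intro j hj hpj
    by_contra hjJ₀
    have := ((linearIndepOn_insert hjJ₀).1 (hJind.mono (Set.insert_subset hj hJ₀J))).2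
    exact this (hpJ₀ ⟨j, hpj, rfl⟩)
  have hfilter : J.toFinset.filter p = J₀.toFinset := by
    ext j
    simp only [Finset.mem_filter, Set.mem_toFinset]
    exact ⟨fun ⟨hj, hpj⟩ => hJp j hj hpj, fun hj => ⟨hJ₀J hj, hJ₀p hj⟩⟩
  refine ⟨J.toFinset, by simpa using hJind, ?_, ?_⟩
  · rw [Set.coe_toFinset]
    refine le_antisymm (span_mono (Set.image_subset_range f J)) ?_
    rw [← Set.image_univ]
    exact span_le.2 hJ
  · rw [hfilter, ← (show LinearIndepOn K f (J₀.toFinset : Set ι) by simpa using hJ₀)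
      |>.finrank_span_image_eq_card, Set.coe_toFinset,
      le_antisymm (span_mono (Set.image_mono hJ₀p)) (span_le.2 hpJ₀)]

theorem Submodule.finrank_lt_add_of_sup_eq_top_of_inf_ne_bot [FiniteDimensional K V]
    {p q : Submodule K V} (hsup : p ⊔ q = ⊤) (hinf : p ⊓ q ≠ ⊥) :
    finrank K V < finrank K p + finrank K q := by
  have hdim := finrank_sup_add_finrank_inf_eq p q
  have hpos : 0 < finrank K ↥(p ⊓ q) := Nat.pos_of_ne_zero (by rwa [Ne, finrank_eq_zero])
  rw [hsup, finrank_top] at hdim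
  omega

theorem exists_linearIndepOn_card_filter_lt_finrank [Finite ι] [FiniteDimensional K V]
    {f : ι → V} (hf : span K (Set.range f) = ⊤) (p : ι → Prop) [DecidablePred p]
    (hp : span K (f '' {j | p j}) ⊓ span K (f '' {j | ¬ p j}) ≠ ⊥) :
    ∃ J : Finset ι, LinearIndepOn K f (J : Set ι) ∧ span K (f '' J) = ⊤ ∧
      (J.filter p).card < finrank K (span K (f '' {j | p j})) := by
  obtain ⟨J, hJ, hJspan, hJcard⟩ := exists_linearIndepOn_card_filter_eq_finrank K f (¬ p ·)
  rw [hf] at hJspan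
  have hJ_card : J.card = finrank K V := by
    rw [← hJ.finrank_span_image_eq_card, hJspan, finrank_top]
  have hsup : span K (f '' {j | p j}) ⊔ span K (f '' {j | ¬ p j}) = ⊤ := by
    rw [← span_union, ← Set.image_union,
      show {j | p j} ∪ {j | ¬ p j} = Set.univ from Set.union_compl_self _, Set.image_univ, hf]
  have hlt := finrank_lt_add_of_sup_eq_top_of_inf_ne_bot hsup hp
  have hsplit := Finset.card_filter_add_card_filter_not (s := J) p
  exact ⟨J, hJ, hJspan, by omega⟩

end DivisionRing

section Field

variable {K V ι : Type*} [Field K] [AddCommGroup V] [Module K V] [FiniteDimensional K V]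

theorem Submodule.dualAnnihilator_biInf_ker (f : ι → Dual K V) (s : Set ι) :
    (⨅ i ∈ s, LinearMap.ker (f i)).dualAnnihilator = span K (f '' s) := by
  have : ⨅ i ∈ s, LinearMap.ker (f i) = (span K (f '' s)).dualCoannihilator := by
    refine SetLike.coe_injective ?_
    rw [coe_dualCoannihilator_span]
    ext x
    simp
  rw [this, Subspace.dualCoannihilator_dualAnnihilator_eq]

theorem span_image_setOf_le_ker_eq_dualAnnihilator (f : ι → Dual K V) {s : Set ι}
    {W : Submodule K V} (hW : W = ⨅ i ∈ s, LinearMap.ker (f i)) :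
    span K (f '' {j | W ≤ LinearMap.ker (f j)}) = W.dualAnnihilator := by
  refine le_antisymm (span_le.2 ?_) ?_
  · rintro _ ⟨j, hj, rfl⟩
    exact (mem_dualAnnihilator _).2 fun x hx => hj hx
  · subst hW
    rw [dualAnnihilator_biInf_ker]
    exact span_mono (Set.image_mono fun i hi => biInf_le (fun i => LinearMap.ker (f i)) hi)

end Field

theorem exists_bases_adapted_to_edge_general
    (n r : ℕ)
    (f : Fin r → ((Fin n → ℂ) →ₗ[ℂ] ℂ))
    (hess : Submodule.span ℂ (Set.range f) = ⊤)
    (hindec : ∀ I : Set (Fin r), I.Nonempty → Iᶜ.Nonempty →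
      Submodule.span ℂ (f '' I) ⊓ Submodule.span ℂ (f '' Iᶜ) ≠ ⊥)
    (W : Submodule ℂ (Fin n → ℂ))
    (hW : ∃ S : Finset (Fin r), S.Nonempty ∧ W = ⨅ i ∈ S, LinearMap.ker (f i))
    (hW0 : W ≠ ⊥) :
    ∃ J J' : Finset (Fin r),
      (LinearIndependent ℂ (fun j : {x : Fin r // x ∈ J} => f j.1) ∧
        Submodule.span ℂ (f '' ↑J) = ⊤) ∧
      (LinearIndependent ℂ (fun j : {x : Fin r // x ∈ J'} => f j.1) ∧
        Submodule.span ℂ (f '' ↑J') = ⊤) ∧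
      (J.filter (fun j => W ≤ LinearMap.ker (f j))).card < n - Module.finrank ℂ W ∧
      (J'.filter (fun j => W ≤ LinearMap.ker (f j))).card = n - Module.finrank ℂ W := by
  obtain ⟨S, ⟨i₀, hi₀⟩, hWS⟩ := hW
  set T := {j | W ≤ LinearMap.ker (f j)}
  have hi₀T : i₀ ∈ T := hWS.trans_le (biInf_le (fun i => LinearMap.ker (f i)) hi₀)
  have hTA : span ℂ (f '' T) = W.dualAnnihilator :=
    span_image_setOf_le_ker_eq_dualAnnihilator f (s := S) (by simpa using hWS)
  have hcodim : finrank ℂ W.dualAnnihilator = n - finrank ℂ W := by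
    have := Subspace.finrank_add_finrank_dualAnnihilator_eq W
    rw [finrank_fin_fun] at this
    omega
  have hTc : Tᶜ.Nonempty := by
    by_contra! hT
    rw [Set.compl_empty_iff] at hT
    rw [hT, Set.image_univ, hess, eq_comm, dualAnnihilator_eq_top_iff] at hTA
    exact hW0 hTA
  obtain ⟨J, hJ, hJspan, hJcard⟩ := exists_linearIndepOn_card_filter_lt_finrank hess
    (fun j => W ≤ LinearMap.ker (f j)) (hindec T ⟨i₀, hi₀T⟩ hTc)
  obtain ⟨J', hJ', hJ'span, hJ'card⟩ :=
    exists_linearIndepOn_card_filter_eq_finrank ℂ f (fun j => W ≤ LinearMap.ker (f j))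
  refine ⟨J, J', ⟨hJ, hJspan⟩, ⟨hJ', hess ▸ hJ'span⟩, ?_, ?_⟩
  all_goals rwa [← hcodim, ← hTA]

/-- Let `f₁,…,f_r` be nonzero linear functionals on `ℂⁿ` defining a central hyperplane
arrangement which is essential and indecomposable.  Then for every edge `W ≠ {0}` there exist
subsets `J, J' ⊆ {1,…,r}` such that `{f_j : j ∈ J}` and `{f_j : j ∈ J'}` are each bases of the
dual space, with `#{j ∈ J : W ⊆ ker f_j} < codim W` and `#{j ∈ J' : W ⊆ ker f_j} = codim W`. -/
theorem exists_bases_adapted_to_edge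
    (n r : ℕ)
    (f : Fin r → ((Fin n → ℂ) →ₗ[ℂ] ℂ))
    (hne : ∀ i, f i ≠ 0)
    (hess : Submodule.span ℂ (Set.range f) = ⊤)
    (hindec : ∀ I : Set (Fin r), I.Nonempty → Iᶜ.Nonempty →
      Submodule.span ℂ (f '' I) ⊓ Submodule.span ℂ (f '' Iᶜ) ≠ ⊥)
    (W : Submodule ℂ (Fin n → ℂ))
    (hW : ∃ S : Finset (Fin r), S.Nonempty ∧ W = ⨅ i ∈ S, LinearMap.ker (f i))
    (hW0 : W ≠ ⊥) :
    ∃ J J' : Finset (Fin r),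
      (LinearIndependent ℂ (fun j : {x : Fin r // x ∈ J} => f j.1) ∧
        Submodule.span ℂ (f '' ↑J) = ⊤) ∧
      (LinearIndependent ℂ (fun j : {x : Fin r // x ∈ J'} => f j.1) ∧
        Submodule.span ℂ (f '' ↑J') = ⊤) ∧
      (J.filter (fun j => W ≤ LinearMap.ker (f j))).card < n - Module.finrank ℂ W ∧
      (J'.filter (fun j => W ≤ LinearMap.ker (f j))).card = n - Module.finrank ℂ W :=
  exists_bases_adapted_to_edge_general n r f hess hindec W hW hW0
end

section
/- Let X be a set, 𝒲 a set of walls in ℝ^r, and U a wall and chamber family of subsets of X with set of walls 𝒲. Then for every chamber σ of 𝒲 and every point α' in the topological closure of σ, one has U^σ ⊆ U^{α'}, where U^σ denotes the common value of U on σ. -/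
/-!
Take `δ ∈ σ` close to `α'` and descend to `γ = δ ⊓ α'`; monotonicity gives
`U^σ = U^δ ⊆ U^γ`. The walls have nonnegative normals, so `γ ≤ α'` stays weakly below every
wall that `α'` is weakly below. The walls are rational and finite modulo `ℤ^r`, so those
strictly below `α'` are bounded away from it, and `γ`, being close to `α'`, stays strictly above
them. Hence `γ` lies in the chamber of `α'`, and `U^γ = U^{α'}`.
-/

open Set

/-- The pairing `L(α) = ∑ i, L i * α i` of a rational covector with a real point. -/
def linPair {r : ℕ} (L : Fin r → ℚ) (α : Fin r → ℝ) : ℝ := ∑ i, (L i : ℝ) * α i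

/-- A wall in `ℝ^r`: an affine hyperplane of the form `L⁻¹(β)` for a nonzero
`L ∈ ℚ_{≥0}^r` and `β ∈ ℝ`. -/
def IsWall {r : ℕ} (Hy : Set (Fin r → ℝ)) : Prop :=
  ∃ (L : Fin r → ℚ) (β : ℝ), (∀ i, 0 ≤ L i) ∧ L ≠ 0 ∧ Hy = {α | linPair L α = β}

/-- A set of walls in `ℝ^r`: a set of walls which is finite modulo translation by `ℤ^r`. -/
def IsWallSet {r : ℕ} (W : Set (Set (Fin r → ℝ))) : Prop :=
  (∀ Hy ∈ W, IsWall Hy) ∧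
  ∃ W₀ ⊆ W, W₀.Finite ∧ ∀ Hy ∈ W, ∃ (m : Fin r → ℤ), ∃ H₀ ∈ W₀,
    Hy = (fun α => α + fun i => (m i : ℝ)) '' H₀

/-- A chamber of a set of walls `W`: a nonempty set obtained by choosing, for each wall,
either the strict upper side or the weak lower side, for some partition `W = Wp ⊔ Wm`. -/
def IsChamber {r : ℕ} (W : Set (Set (Fin r → ℝ))) (σ : Set (Fin r → ℝ)) : Prop :=
  σ.Nonempty ∧
  ∃ Wp Wm : Set (Set (Fin r → ℝ)), Wp ∪ Wm = W ∧ Wp ∩ Wm = ∅ ∧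
    σ = {α | (∀ Hy ∈ Wp, ∀ (L : Fin r → ℚ) (β : ℝ),
                (∀ i, 0 ≤ L i) → L ≠ 0 → Hy = {x | linPair L x = β} → β < linPair L α) ∧
             (∀ Hy ∈ Wm, ∀ (L : Fin r → ℚ) (β : ℝ),
                (∀ i, 0 ≤ L i) → L ≠ 0 → Hy = {x | linPair L x = β} → linPair L α ≤ β)}

/-- A wall `L⁻¹(γ)` separates `α` and `β` if `L(α) ≤ γ < L(β)` or `L(β) ≤ γ < L(α)`. -/
def WallSeparates {r : ℕ} (Hy : Set (Fin r → ℝ)) (α β : Fin r → ℝ) : Prop :=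
  ∃ (L : Fin r → ℚ) (γ : ℝ), (∀ i, 0 ≤ L i) ∧ L ≠ 0 ∧ Hy = {x | linPair L x = γ} ∧
    ((linPair L α ≤ γ ∧ γ < linPair L β) ∨ (linPair L β ≤ γ ∧ γ < linPair L α))


open Filter Topology

section

variable {r : ℕ}

lemma linPair_add (L : Fin r → ℚ) (x y : Fin r → ℝ) :
    linPair L (x + y) = linPair L x + linPair L y := by
  simp only [linPair, Pi.add_apply, mul_add, Finset.sum_add_distrib]

lemma linPair_add_const (L : Fin r → ℚ) (x : Fin r → ℝ) (s : ℝ) :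
    linPair L (x + fun _ => s) = linPair L x + (∑ i, (L i : ℝ)) * s := by
  rw [linPair_add, Finset.sum_mul]
  rfl

lemma linPair_mono {L : Fin r → ℚ} (hL : ∀ i, 0 ≤ L i) {x y : Fin r → ℝ} (hxy : x ≤ y) :
    linPair L x ≤ linPair L y :=
  Finset.sum_le_sum fun i _ => mul_le_mul_of_nonneg_left (hxy i) (by exact_mod_cast hL i)

lemma continuous_linPair (L : Fin r → ℚ) : Continuous (linPair L) := by
  unfold linPair
  fun_prop

lemma sum_ratCast_pos {L : Fin r → ℚ} (hL : ∀ i, 0 ≤ L i) (hL0 : L ≠ 0) :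
    0 < ∑ i, (L i : ℝ) := by
  obtain ⟨i, hi⟩ := Function.ne_iff.1 hL0
  exact Finset.sum_pos' (fun j _ => by exact_mod_cast hL j)
    ⟨i, Finset.mem_univ i, by exact_mod_cast (hL i).lt_of_ne' hi⟩

lemma image_add_setOf_linPair_eq (L : Fin r → ℚ) (β : ℝ) (c : Fin r → ℝ) :
    (· + c) '' {x | linPair L x = β} = {x | linPair L x = β + linPair L c} := by
  ext x
  have hx : linPair L x = linPair L (x - c) + linPair L c := by rw [← linPair_add, sub_add_cancel]
  simp only [Set.image_add_right, Set.mem_preimage, Set.mem_ofPred_eq, ← sub_eq_add_neg, hx,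
    add_left_inj]

/-- Move `x` along the diagonal `(1, …, 1)` onto the hyperplane. -/
lemma linPair_sub_eq_of_setOf_eq {L L' : Fin r → ℚ} {β β' : ℝ} (hL : ∀ i, 0 ≤ L i)
    (hL0 : L ≠ 0) (h : {x | linPair L x = β} = {x | linPair L' x = β'}) (x : Fin r → ℝ) :
    linPair L' x - β' = (∑ i, (L' i : ℝ)) / (∑ i, (L i : ℝ)) * (linPair L x - β) := by
  have hS := (sum_ratCast_pos hL hL0).ne'
  set s := (β - linPair L x) / ∑ i, (L i : ℝ)
  have hq : x + (fun _ => s) ∈ {x | linPair L x = β} := by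
    simp only [Set.mem_ofPred_eq, linPair_add_const, s]
    field_simp
    ring
  rw [h, Set.mem_ofPred_eq, linPair_add_const] at hq
  rw [← hq]
  simp only [s]
  field_simp
  ring

def StrictlyAboveWall (Hy : Set (Fin r → ℝ)) (α : Fin r → ℝ) : Prop :=
  ∀ (L : Fin r → ℚ) (β : ℝ), (∀ i, 0 ≤ L i) → L ≠ 0 → Hy = {x | linPair L x = β} →
    β < linPair L α

def WeaklyBelowWall (Hy : Set (Fin r → ℝ)) (α : Fin r → ℝ) : Prop :=
  ∀ (L : Fin r → ℚ) (β : ℝ), (∀ i, 0 ≤ L i) → L ≠ 0 → Hy = {x | linPair L x = β} →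
    linPair L α ≤ β

section Sides

variable {Hy : Set (Fin r → ℝ)} {L : Fin r → ℚ} {β : ℝ}

lemma strictlyAboveWall_iff (hL : ∀ i, 0 ≤ L i) (hL0 : L ≠ 0) (hHy : Hy = {x | linPair L x = β})
    (α : Fin r → ℝ) : StrictlyAboveWall Hy α ↔ β < linPair L α := by
  refine ⟨fun h => h L β hL hL0 hHy, fun h L' β' hL' hL0' hHy' => ?_⟩
  have hc : 0 < (∑ i, (L' i : ℝ)) / ∑ i, (L i : ℝ) :=
    div_pos (sum_ratCast_pos hL' hL0') (sum_ratCast_pos hL hL0)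
  have := linPair_sub_eq_of_setOf_eq hL hL0 (hHy.symm.trans hHy') α
  nlinarith

lemma weaklyBelowWall_iff (hL : ∀ i, 0 ≤ L i) (hL0 : L ≠ 0) (hHy : Hy = {x | linPair L x = β})
    (α : Fin r → ℝ) : WeaklyBelowWall Hy α ↔ linPair L α ≤ β := by
  refine ⟨fun h => h L β hL hL0 hHy, fun h L' β' hL' hL0' hHy' => ?_⟩
  have hc : 0 < (∑ i, (L' i : ℝ)) / ∑ i, (L i : ℝ) :=
    div_pos (sum_ratCast_pos hL' hL0') (sum_ratCast_pos hL hL0)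
  have := linPair_sub_eq_of_setOf_eq hL hL0 (hHy.symm.trans hHy') α
  nlinarith

lemma weaklyBelowWall_of_not_strictlyAboveWall (hHy : IsWall Hy) {α : Fin r → ℝ}
    (h : ¬StrictlyAboveWall Hy α) : WeaklyBelowWall Hy α := by
  obtain ⟨L, β, hL, hL0, rfl⟩ := hHy
  rw [strictlyAboveWall_iff hL hL0 rfl, not_lt] at h
  exact (weaklyBelowWall_iff hL hL0 rfl α).2 h

lemma WeaklyBelowWall.mono {α α' : Fin r → ℝ} (h : WeaklyBelowWall Hy α') (hle : α ≤ α') :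
    WeaklyBelowWall Hy α :=
  fun L β hL hL0 hHy => (linPair_mono hL hle).trans (h L β hL hL0 hHy)

end Sides

def chamberOf (W : Set (Set (Fin r → ℝ))) (α : Fin r → ℝ) : Set (Fin r → ℝ) :=
  {γ | (∀ Hy ∈ W, StrictlyAboveWall Hy α → StrictlyAboveWall Hy γ) ∧
    ∀ Hy ∈ W, ¬StrictlyAboveWall Hy α → WeaklyBelowWall Hy γ}

section ChamberOf

variable {W : Set (Set (Fin r → ℝ))}

lemma mem_chamberOf_self (hW : ∀ Hy ∈ W, IsWall Hy) (α : Fin r → ℝ) : α ∈ chamberOf W α :=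
  ⟨fun _ _ h => h, fun Hy hHy => weaklyBelowWall_of_not_strictlyAboveWall (hW Hy hHy)⟩

lemma isChamber_chamberOf (hW : ∀ Hy ∈ W, IsWall Hy) (α : Fin r → ℝ) :
    IsChamber W (chamberOf W α) := by
  refine ⟨⟨α, mem_chamberOf_self hW α⟩, {Hy ∈ W | StrictlyAboveWall Hy α},
    {Hy ∈ W | ¬StrictlyAboveWall Hy α}, ?_, ?_, ?_⟩
  · ext Hy
    simp only [Set.mem_union, Set.mem_sep_iff]
    tauto
  · ext Hy
    simp only [Set.mem_inter_iff, Set.mem_sep_iff, Set.mem_empty_iff_false, iff_false]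
    tauto
  · ext γ
    simp only [chamberOf, Set.mem_sep_iff, and_imp]
    rfl

end ChamberOf

lemma exists_forall_linPair_intCast_eq_mul (L : Fin r → ℚ) :
    ∃ c : ℝ, 0 < c ∧ ∀ m : Fin r → ℤ, ∃ k : ℤ, linPair L (fun i => (m i : ℝ)) = k * c := by
  classical
  have hz : ∀ i, ∃ z : ℤ, (L i : ℝ) = z / ∏ j, ((L j).den : ℝ) := by
    intro i
    refine ⟨(L i).num * ∏ j ∈ Finset.univ.erase i, (L j).den, ?_⟩
    rw [← Finset.mul_prod_erase _ _ (Finset.mem_univ i)]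
    push_cast
    rw [mul_div_mul_right _ _ (by positivity), Rat.cast_def]
  choose z hz using hz
  refine ⟨1 / ∏ j, ((L j).den : ℝ), by positivity, fun m => ⟨∑ i, z i * m i, ?_⟩⟩
  simp only [linPair, hz]
  push_cast
  rw [Finset.sum_mul]
  exact Finset.sum_congr rfl fun i _ => by ring

lemma exists_lt_forall_intCast_mul_le {c : ℝ} (hc : 0 < c) (y : ℝ) :
    ∃ t < y, ∀ k : ℤ, k * c < y → k * c ≤ t := by
  refine ⟨(⌈y / c⌉ - 1 : ℤ) * c, ?_, fun k hk => ?_⟩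
  · rw [← lt_div_iff₀ hc]
    push_cast
    linarith [Int.ceil_lt_add_one (y / c)]
  · have hk' : k < ⌈y / c⌉ := Int.lt_ceil.2 ((lt_div_iff₀ hc).2 hk)
    gcongr
    exact_mod_cast Int.le_sub_one_of_lt hk'

lemma eventually_forall_add_linPair_intCast_lt (L : Fin r → ℚ) (β : ℝ) (α : Fin r → ℝ) :
    ∀ᶠ γ in 𝓝 α, ∀ m : Fin r → ℤ, β + linPair L (fun i => (m i : ℝ)) < linPair L α →
      β + linPair L (fun i => (m i : ℝ)) < linPair L γ := by
  obtain ⟨c, hc, hk⟩ := exists_forall_linPair_intCast_eq_mul L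
  obtain ⟨t, ht, hmax⟩ := exists_lt_forall_intCast_mul_le hc (linPair L α - β)
  filter_upwards [(continuous_linPair L).continuousAt.eventually_const_lt
    (show β + t < linPair L α by linarith)] with γ hγ m hm
  obtain ⟨k, hk⟩ := hk m
  rw [hk] at hm ⊢
  linarith [hmax k (by linarith)]

lemma eventually_forall_strictlyAboveWall {W : Set (Set (Fin r → ℝ))} (hW : IsWallSet W)
    (α : Fin r → ℝ) :
    ∀ᶠ γ in 𝓝 α, ∀ Hy ∈ W, StrictlyAboveWall Hy α → StrictlyAboveWall Hy γ := by
  obtain ⟨hwall, W₀, hW₀W, hW₀, htrans⟩ := hW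
  have hW₀α : ∀ H₀ ∈ W₀, ∀ᶠ γ in 𝓝 α, ∀ m : Fin r → ℤ,
      StrictlyAboveWall ((· + fun i => (m i : ℝ)) '' H₀) α →
        StrictlyAboveWall ((· + fun i => (m i : ℝ)) '' H₀) γ := by
    intro H₀ hH₀
    obtain ⟨L, β, hL, hL0, rfl⟩ := hwall H₀ (hW₀W hH₀)
    filter_upwards [eventually_forall_add_linPair_intCast_lt L β α] with γ hγ m
    simp only [strictlyAboveWall_iff hL hL0 (image_add_setOf_linPair_eq L β _)]
    exact hγ m
  filter_upwards [(Filter.eventually_all_finite hW₀).2 hW₀α] with γ hγ Hy hHy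
  obtain ⟨m, H₀, hH₀, rfl⟩ := htrans Hy hHy
  exact hγ H₀ hH₀ m

lemma exists_inf_mem_chamberOf {W : Set (Set (Fin r → ℝ))} (hW : IsWallSet W)
    {s : Set (Fin r → ℝ)} {α : Fin r → ℝ} (hα : α ∈ closure s) :
    ∃ δ ∈ s, δ ⊓ α ∈ chamberOf W α := by
  have hinf : Tendsto (· ⊓ α) (𝓝 α) (𝓝 α) := by
    have : Continuous (· ⊓ α) :=
      continuous_pi fun i => (continuous_apply i).inf (continuous_const (y := α i))
    simpa using this.tendsto α
  obtain ⟨δ, hδs, hδ⟩ :=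
    (mem_closure_iff_frequently.1 hα).and_eventually (hinf.eventually
      (eventually_forall_strictlyAboveWall hW α)) |>.exists
  exact ⟨δ, hδs, hδ, fun Hy hHy h =>
    (weaklyBelowWall_of_not_strictlyAboveWall (hW.1 Hy hHy) h).mono inf_le_right⟩

end

theorem wall_chamber_family_closure_general {r : ℕ} {X : Type*}
    (W : Set (Set (Fin r → ℝ))) (hW : IsWallSet W)
    (U : (Fin r → ℝ) → Set X)
    (hmono : ∀ α β : Fin r → ℝ, α ≤ β → U β ⊆ U α)
    (hconst : ∀ σ : Set (Fin r → ℝ), IsChamber W σ → ∀ α ∈ σ, ∀ β ∈ σ, U α = U β)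
    (σ : Set (Fin r → ℝ)) (hσ : IsChamber W σ)
    (α : Fin r → ℝ) (hα : α ∈ σ)
    (α' : Fin r → ℝ) (hα' : α' ∈ closure σ) :
    U α ⊆ U α' := by
  obtain ⟨δ, hδσ, hδα'⟩ := exists_inf_mem_chamberOf hW hα'
  have hτ := isChamber_chamberOf hW.1 α'
  calc U α = U δ := hconst σ hσ α hα δ hδσ
    _ ⊆ U (δ ⊓ α') := hmono _ _ inf_le_left
    _ = U α' := hconst _ hτ _ hδα' _ (mem_chamberOf_self hW.1 α')

/-- For a wall and chamber family `U` of subsets of `X` with set of walls `W`, for every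
chamber `σ` and every point `α'` in the closure of `σ`, the common value `U^σ = U α` is
contained in `U^{α'}`. -/
theorem wall_chamber_family_closure {r : ℕ} (hr : 0 < r) {X : Type*}
    (W : Set (Set (Fin r → ℝ))) (hW : IsWallSet W)
    (U : (Fin r → ℝ) → Set X)
    (hmono : ∀ α β : Fin r → ℝ, α ≤ β → U β ⊆ U α)
    (hconst : ∀ σ : Set (Fin r → ℝ), IsChamber W σ → ∀ α ∈ σ, ∀ β ∈ σ, U α = U β)
    (σ : Set (Fin r → ℝ)) (hσ : IsChamber W σ)
    (α : Fin r → ℝ) (hα : α ∈ σ)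
    (α' : Fin r → ℝ) (hα' : α' ∈ closure σ) :
    U α ⊆ U α' :=
  wall_chamber_family_closure_general W hW U hmono hconst σ hσ α hα α' hα'
end
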